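/- One-shot joint source-channel coding over a MAC (Cover–El Gamal–Salehi form): Let q_{S₁S₂} be a pmf on finite sets 𝒮₁ × 𝒮₂ and q_{Y|X₁X₂} a multiple-access channel from 𝒳₁ × 𝒳₂ to 𝒴. Let k₁ : 𝒮₁ → 𝒦 and k₂ : 𝒮₂ → 𝒦 be functions with k₁(s₁) = k₂(s₂) whenever q_{S₁S₂}(s₁,s₂) > 0, and set K = k₁(S₁) (a common part of S₁ and S₂). For any joint pmf of the form q(s₁,s₂,t,x₁,x₂,y) = q(s₁,s₂)·q(t)·q(x₁|s₁,t)·q(x₂|s₂,t)·q(y|x₁,x₂), there exists a code (stochastic encoders φ_k : 𝒮_k → 𝒳_k for k = 1,2 and a stochastic decoder ψ : 𝒴 → 𝒮₁ × 𝒮₂) whose probability of correct decoding satisfies P[ ψ(Y) = (S₁,S₂) ] ≥ E_q [ ( 1 + 2^{h_q(S₁|S₂) − i_q(Y;X₁|X₂,S₂,T)} + 2^{h_q(S₂|S₁) − i_q(Y;X₂|X₁,S₁,T)} + 2^{h_q(S₁,S₂|K) − i_q(Y;X₁,X₂|K,T)} + 2^{h_q(S₁,S₂) − i_q(Y;X₁,X₂)}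 )^{−1} ]. -/

import Mathlib

open scoped BigOperators

/-- A pmf on a finite type, represented by a nonnegative real-valued function summing to 1. -/
structure FinPMF (α : Type) [Fintype α] where
  p : α → ℝ
  nonneg : ∀ a, 0 ≤ p a
  sum_eq_one : ∑ a, p a = 1

open Classical in
/-- Indicator of a proposition, as a real number. -/
noncomputable def ind (P : Prop) : ℝ := if P then 1 else 0

variable {S1 S2 K T X1 X2 Y : Type}
  [Fintype S1] [Fintype S2] [Fintype K] [Fintype T]
  [Fintype X1] [Fintype X2] [Fintype Y]

/-- The joint pmf
`q(s₁,s₂,t,x₁,x₂,y) = q(s₁,s₂) q(t) q(x₁|s₁,t) q(x₂|s₂,t) q(y|x₁,x₂)`. -/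
noncomputable def qMAC (qS : FinPMF (S1 × S2)) (qT : FinPMF T)
    (qX1 : S1 → T → FinPMF X1) (qX2 : S2 → T → FinPMF X2)
    (Wch : X1 → X2 → FinPMF Y)
    (s1 : S1) (s2 : S2) (t : T) (x1 : X1) (x2 : X2) (y : Y) : ℝ :=
  qS.p (s1, s2) * qT.p t * (qX1 s1 t).p x1 * (qX2 s2 t).p x2 * (Wch x1 x2).p y

noncomputable def mgS1 (qS : FinPMF (S1 × S2)) (s1 : S1) : ℝ :=
  ∑ s2 : S2, qS.p (s1, s2)

noncomputable def mgS2 (qS : FinPMF (S1 × S2)) (s2 : S2) : ℝ :=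
  ∑ s1 : S1, qS.p (s1, s2)

/-- Marginal pmf of the common part `K = k₁(S₁)`. -/
noncomputable def mgK (qS : FinPMF (S1 × S2)) (k1 : S1 → K) (k : K) : ℝ :=
  ∑ s1 : S1, ∑ s2 : S2, ind (k1 s1 = k) * qS.p (s1, s2)

section Marginals

variable (qS : FinPMF (S1 × S2)) (qT : FinPMF T)
  (qX1 : S1 → T → FinPMF X1) (qX2 : S2 → T → FinPMF X2) (Wch : X1 → X2 → FinPMF Y)

noncomputable def mX2S2T (x2 : X2) (s2 : S2) (t : T) : ℝ :=
  ∑ s1 : S1, ∑ x1 : X1, ∑ y : Y, qMAC qS qT qX1 qX2 Wch s1 s2 t x1 x2 y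

noncomputable def mX1X2S2T (x1 : X1) (x2 : X2) (s2 : S2) (t : T) : ℝ :=
  ∑ s1 : S1, ∑ y : Y, qMAC qS qT qX1 qX2 Wch s1 s2 t x1 x2 y

noncomputable def mYX2S2T (y : Y) (x2 : X2) (s2 : S2) (t : T) : ℝ :=
  ∑ s1 : S1, ∑ x1 : X1, qMAC qS qT qX1 qX2 Wch s1 s2 t x1 x2 y

noncomputable def mYX1X2S2T (y : Y) (x1 : X1) (x2 : X2) (s2 : S2) (t : T) : ℝ :=
  ∑ s1 : S1, qMAC qS qT qX1 qX2 Wch s1 s2 t x1 x2 y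

noncomputable def mX1S1T (x1 : X1) (s1 : S1) (t : T) : ℝ :=
  ∑ s2 : S2, ∑ x2 : X2, ∑ y : Y, qMAC qS qT qX1 qX2 Wch s1 s2 t x1 x2 y

noncomputable def mX1X2S1T (x1 : X1) (x2 : X2) (s1 : S1) (t : T) : ℝ :=
  ∑ s2 : S2, ∑ y : Y, qMAC qS qT qX1 qX2 Wch s1 s2 t x1 x2 y

noncomputable def mYX1S1T (y : Y) (x1 : X1) (s1 : S1) (t : T) : ℝ :=
  ∑ s2 : S2, ∑ x2 : X2, qMAC qS qT qX1 qX2 Wch s1 s2 t x1 x2 y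

noncomputable def mYX1X2S1T (y : Y) (x1 : X1) (x2 : X2) (s1 : S1) (t : T) : ℝ :=
  ∑ s2 : S2, qMAC qS qT qX1 qX2 Wch s1 s2 t x1 x2 y

noncomputable def mKT (k1 : S1 → K) (k : K) (t : T) : ℝ :=
  ∑ s1 : S1, ∑ s2 : S2, ∑ x1 : X1, ∑ x2 : X2, ∑ y : Y,
    ind (k1 s1 = k) * qMAC qS qT qX1 qX2 Wch s1 s2 t x1 x2 y

noncomputable def mX1X2KT (k1 : S1 → K) (x1 : X1) (x2 : X2) (k : K) (t : T) : ℝ :=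
  ∑ s1 : S1, ∑ s2 : S2, ∑ y : Y,
    ind (k1 s1 = k) * qMAC qS qT qX1 qX2 Wch s1 s2 t x1 x2 y

noncomputable def mYKT (k1 : S1 → K) (y : Y) (k : K) (t : T) : ℝ :=
  ∑ s1 : S1, ∑ s2 : S2, ∑ x1 : X1, ∑ x2 : X2,
    ind (k1 s1 = k) * qMAC qS qT qX1 qX2 Wch s1 s2 t x1 x2 y

noncomputable def mYX1X2KT (k1 : S1 → K) (y : Y) (x1 : X1) (x2 : X2) (k : K) (t : T) : ℝ :=
  ∑ s1 : S1, ∑ s2 : S2,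
    ind (k1 s1 = k) * qMAC qS qT qX1 qX2 Wch s1 s2 t x1 x2 y

noncomputable def mX1X2 (x1 : X1) (x2 : X2) : ℝ :=
  ∑ s1 : S1, ∑ s2 : S2, ∑ t : T, ∑ y : Y, qMAC qS qT qX1 qX2 Wch s1 s2 t x1 x2 y

noncomputable def mY (y : Y) : ℝ :=
  ∑ s1 : S1, ∑ s2 : S2, ∑ t : T, ∑ x1 : X1, ∑ x2 : X2,
    qMAC qS qT qX1 qX2 Wch s1 s2 t x1 x2 y

noncomputable def mYX1X2 (y : Y) (x1 : X1) (x2 : X2) : ℝ :=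
  ∑ s1 : S1, ∑ s2 : S2, ∑ t : T, qMAC qS qT qX1 qX2 Wch s1 s2 t x1 x2 y

/-- Conditional information `h_q(S₁|S₂)`. -/
noncomputable def hS1cS2 (s1 : S1) (s2 : S2) : ℝ :=
  -Real.logb 2 (qS.p (s1, s2) / mgS2 qS s2)

/-- Conditional information `h_q(S₂|S₁)`. -/
noncomputable def hS2cS1 (s1 : S1) (s2 : S2) : ℝ :=
  -Real.logb 2 (qS.p (s1, s2) / mgS1 qS s1)

/-- Conditional information `h_q(S₁,S₂|K)` evaluated at `k = k₁(s₁)`. -/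
noncomputable def hS1S2cK (k1 : S1 → K) (s1 : S1) (s2 : S2) : ℝ :=
  -Real.logb 2 (qS.p (s1, s2) / mgK qS k1 (k1 s1))

/-- Information `h_q(S₁,S₂)`. -/
noncomputable def hS1S2 (s1 : S1) (s2 : S2) : ℝ :=
  -Real.logb 2 (qS.p (s1, s2))

/-- Conditional information density `i_q(Y;X₁|X₂,S₂,T)`. -/
noncomputable def iYX1cX2S2T (y : Y) (x1 : X1) (x2 : X2) (s2 : S2) (t : T) : ℝ :=
  Real.logb 2 (mYX1X2S2T qS qT qX1 qX2 Wch y x1 x2 s2 t * mX2S2T qS qT qX1 qX2 Wch x2 s2 t /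
    (mYX2S2T qS qT qX1 qX2 Wch y x2 s2 t * mX1X2S2T qS qT qX1 qX2 Wch x1 x2 s2 t))

/-- Conditional information density `i_q(Y;X₂|X₁,S₁,T)`. -/
noncomputable def iYX2cX1S1T (y : Y) (x1 : X1) (x2 : X2) (s1 : S1) (t : T) : ℝ :=
  Real.logb 2 (mYX1X2S1T qS qT qX1 qX2 Wch y x1 x2 s1 t * mX1S1T qS qT qX1 qX2 Wch x1 s1 t /
    (mYX1S1T qS qT qX1 qX2 Wch y x1 s1 t * mX1X2S1T qS qT qX1 qX2 Wch x1 x2 s1 t))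

/-- Conditional information density `i_q(Y;X₁,X₂|K,T)`, evaluated at `k`. -/
noncomputable def iYX1X2cKT (k1 : S1 → K) (y : Y) (x1 : X1) (x2 : X2) (k : K) (t : T) : ℝ :=
  Real.logb 2 (mYX1X2KT qS qT qX1 qX2 Wch k1 y x1 x2 k t * mKT qS qT qX1 qX2 Wch k1 k t /
    (mYKT qS qT qX1 qX2 Wch k1 y k t * mX1X2KT qS qT qX1 qX2 Wch k1 x1 x2 k t))

/-- Information density `i_q(Y;X₁,X₂)`. -/
noncomputable def iYX1X2 (y : Y) (x1 : X1) (x2 : X2) : ℝ :=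
  Real.logb 2 (mYX1X2 qS qT qX1 qX2 Wch y x1 x2 /
    (mX1X2 qS qT qX1 qX2 Wch x1 x2 * mY qS qT qX1 qX2 Wch y))

end Marginals

/-- Probability of correct decoding `P[ψ(Y) = (S₁,S₂)]` of a code for lossless
transmission of correlated sources over a MAC: `(S₁,S₂) ~ q_{S₁S₂}`, `X_k` generated
by the stochastic encoder `φ_k` from `S_k` (with independent encoder randomness),
and `Y` by the channel. -/
noncomputable def pCorrectMAC (qS : FinPMF (S1 × S2)) (Wch : X1 → X2 → FinPMF Y)
    (enc1 : S1 → FinPMF X1) (enc2 : S2 → FinPMF X2)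
    (dec : Y → FinPMF (S1 × S2)) : ℝ :=
  ∑ s1 : S1, ∑ s2 : S2, ∑ x1 : X1, ∑ x2 : X2, ∑ y : Y,
    qS.p (s1, s2) * (enc1 s1).p x1 * (enc2 s2).p x2 * (Wch x1 x2).p y *
      (dec y).p (s1, s2)

/-!
Random coding with a likelihood decoder. Draw, all independently, a time-sharing symbol
`τ(k) ~ q_T` for every value `k` of the common part and codewords `f₁(s₁, t) ~ q(·|s₁, t)`,
`f₂(s₂, t) ~ q(·|s₂, t)`; encoder `j` sends `φ_j(s_j) = f_j(s_j, τ(k_j(s_j)))`, and the decoder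
outputs `ŝ` with probability proportional to `q(ŝ) W(y | φ₁(ŝ₁), φ₂(ŝ₂))`.

Fix the source pair `s`, the output `y` and the entries `(t, x₁, x₂)` that the codebook uses for
`s`. Since the entries of the codebook are independent, conditioning on these values is the same
as overwriting them. The probability of decoding `s` is then `Z / (Z + J)` with
`Z = q(s) W(y|x₁,x₂)` and `J` the likelihood mass of the wrong candidates, and Jensen's inequality
for `x ↦ 1/x` bounds its average below by `Z / (Z + E J)`. Sorting the wrong candidates by which
of `ŝ₁`, `ŝ₂` and the common part agree with those of `s` bounds `E J` by four terms, and these are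
exactly `Z 2^{h - i}` for the four exponents of the bound. Some codebook does at least as well as
the average one.
-/

open Finset Function

theorem ind_of {P : Prop} (h : P) : ind P = 1 := by
  classical
  simp [ind, h]

theorem ind_of_not {P : Prop} (h : ¬P) : ind P = 0 := by
  classical
  simp [ind, h]

theorem ind_nonneg (P : Prop) : 0 ≤ ind P := by
  classical
  unfold ind; split <;> norm_num

theorem sum_ind_eq_mul {α : Type} [Fintype α] (b : α) (G : α → ℝ) :
    ∑ a, ind (a = b) * G a = G b := by
  classical
  simp [ind]

theorem sum_ind_eq {α : Type} [Fintype α] (b : α) : ∑ a, ind (b = a) = 1 := by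
  classical
  simp [ind]

namespace FinPMF

variable {α β ι : Type} [Fintype α] [Fintype β] [Fintype ι]

theorem nonempty (p : FinPMF α) : Nonempty α := by
  by_contra h
  have := p.sum_eq_one
  simp [not_nonempty_iff.mp h] at this

theorem sum_const_mul (p : FinPMF α) (c : ℝ) : ∑ a, c * p.p a = c := by
  rw [← Finset.mul_sum, p.sum_eq_one, mul_one]

theorem sum_const_mul_mul (p : FinPMF α) (c d : ℝ) : ∑ a, c * p.p a * d = c * d := by
  rw [← Finset.sum_mul, sum_const_mul]

noncomputable def expect (p : FinPMF α) (F : α → ℝ) : ℝ := ∑ a, p.p a * F a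

theorem expect_const (p : FinPMF α) (c : ℝ) : p.expect (fun _ => c) = c := by
  rw [expect, ← Finset.sum_mul, p.sum_eq_one, one_mul]

theorem expect_const_mul (p : FinPMF α) (c : ℝ) (F : α → ℝ) :
    p.expect (fun a => c * F a) = c * p.expect F := by
  simp only [expect, Finset.mul_sum]
  exact Finset.sum_congr rfl fun _ _ => by ring

theorem expect_const_add (p : FinPMF α) (c : ℝ) (F : α → ℝ) :
    p.expect (fun a => c + F a) = c + p.expect F := by
  simp only [expect, mul_add, Finset.sum_add_distrib, ← Finset.sum_mul, p.sum_eq_one, one_mul]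

theorem expect_sum {γ : Type} (p : FinPMF α) (s : Finset γ) (F : γ → α → ℝ) :
    p.expect (fun a => ∑ i ∈ s, F i a) = ∑ i ∈ s, p.expect (F i) := by
  simp only [expect, Finset.mul_sum]
  exact Finset.sum_comm

theorem expect_mono (p : FinPMF α) {F G : α → ℝ} (h : ∀ a, F a ≤ G a) :
    p.expect F ≤ p.expect G :=
  Finset.sum_le_sum fun a _ => mul_le_mul_of_nonneg_left (h a) (p.nonneg a)

theorem expect_nonneg (p : FinPMF α) {F : α → ℝ} (h : ∀ a, 0 ≤ F a) : 0 ≤ p.expect F :=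
  Finset.sum_nonneg fun a _ => mul_nonneg (p.nonneg a) (h a)

theorem expect_pos (p : FinPMF α) {F : α → ℝ} (h : ∀ a, 0 ≤ F a) {a : α} (hpa : 0 < p.p a)
    (hFa : 0 < F a) : 0 < p.expect F :=
  Finset.sum_pos' (fun a _ => mul_nonneg (p.nonneg a) (h a)) ⟨a, mem_univ a, mul_pos hpa hFa⟩

theorem expect_ind_mul (p : FinPMF α) (b : α) (G : α → ℝ) :
    p.expect (fun a => ind (a = b) * G a) = p.p b * G b := by
  simp only [expect, mul_left_comm (p.p _)]
  exact sum_ind_eq_mul b _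

theorem exists_expect_le (p : FinPMF α) (F : α → ℝ) : ∃ a, p.expect F ≤ F a := by
  have : Nonempty α := p.nonempty
  obtain ⟨a, -, ha⟩ := Finset.exists_max_image univ F univ_nonempty
  refine ⟨a, ?_⟩
  calc p.expect F ≤ p.expect fun _ => F a := p.expect_mono fun b => ha b (mem_univ b)
    _ = F a := p.expect_const _

theorem inv_expect_le_expect_inv (p : FinPMF α) {F : α → ℝ} (hF : ∀ a, 0 < F a) :
    (p.expect F)⁻¹ ≤ p.expect fun a => (F a)⁻¹ := by
  set m := p.expect F
  rcases le_or_gt m 0 with hm | hm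
  · exact (inv_nonpos.mpr hm).trans (p.expect_nonneg fun a => (inv_pos.mpr (hF a)).le)
  have tangent : ∀ a, 2 / m + (-1 / m ^ 2) * F a ≤ (F a)⁻¹ := fun a => by
    have := hF a
    rw [← sub_nonneg]
    have key : (F a)⁻¹ - (2 / m + -1 / m ^ 2 * F a) = (F a - m) ^ 2 / (F a * m ^ 2) := by
      field_simp; ring
    rw [key]; positivity
  calc m⁻¹ = 2 / m + (-1 / m ^ 2) * m := by field_simp; ring
    _ = p.expect fun a => 2 / m + (-1 / m ^ 2) * F a := by
      rw [expect_const_add, expect_const_mul]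
    _ ≤ _ := p.expect_mono tangent

noncomputable def pure (b : α) : FinPMF α :=
  ⟨fun a => ind (a = b), fun _ => ind_nonneg _, by simpa [eq_comm] using sum_ind_eq b⟩

noncomputable def prod (p : FinPMF α) (q : FinPMF β) : FinPMF (α × β) :=
  ⟨fun x => p.p x.1 * q.p x.2, fun x => mul_nonneg (p.nonneg _) (q.nonneg _), by
    rw [Fintype.sum_prod_type]; simp [← Finset.mul_sum, q.sum_eq_one, p.sum_eq_one]⟩

theorem expect_prod (p : FinPMF α) (q : FinPMF β) (F : α × β → ℝ) :
    (p.prod q).expect F = p.expect fun a => q.expect fun b => F (a, b) := by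
  simp only [expect, prod, Fintype.sum_prod_type, Finset.mul_sum]
  exact Finset.sum_congr rfl fun _ _ => Finset.sum_congr rfl fun _ _ => by ring

section Pi

variable [DecidableEq ι]

noncomputable def pi (p : ι → FinPMF β) : FinPMF (ι → β) :=
  ⟨fun f => ∏ i, (p i).p (f i), fun f => Finset.prod_nonneg fun i _ => (p i).nonneg _, by
    rw [← Fintype.prod_sum]; simp [FinPMF.sum_eq_one]⟩

theorem expect_pi_splitAt (p : ι → FinPMF β) (i : ι) (F : (ι → β) → ℝ) :
    (pi p).expect F = (p i).expect fun b => (pi fun j : {j // j ≠ i} => p j).expect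
      fun g => F ((Equiv.funSplitAt i β).symm (b, g)) := by
  simp only [expect, pi, ← (Equiv.funSplitAt i β).symm.sum_comp, Fintype.sum_prod_type,
    Fintype.prod_eq_mul_prod_subtype_ne _ i, Finset.mul_sum]
  refine Finset.sum_congr rfl fun b _ => Finset.sum_congr rfl fun g _ => ?_
  have : ∀ j : {j // j ≠ i}, (Equiv.funSplitAt i β).symm (b, g) j = g j := fun j => by
    simp [Equiv.funSplitAt_symm_apply, j.2]
  simp only [this, Equiv.funSplitAt_symm_apply, dite_true, mul_assoc]

theorem expect_pi_ind_mul (p : ι → FinPMF β) (i : ι) (b : β) (F : (ι → β) → ℝ) :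
    (pi p).expect (fun f => ind (f i = b) * F f) =
      (p i).p b * (pi p).expect fun f => F (update f i b) := by
  have update_split : ∀ c g, update ((Equiv.funSplitAt i β).symm (c, g)) i b =
      (Equiv.funSplitAt i β).symm (b, g) := fun c g => by
    ext j
    by_cases hj : j = i
    · subst hj; simp
    · simp [hj, Equiv.funSplitAt_symm_apply]
  simp only [expect_pi_splitAt p i, update_split, expect_const]
  simp [Equiv.funSplitAt_symm_apply, expect_const_mul, expect_ind_mul]

theorem expect_pi_apply (p : ι → FinPMF β) (i : ι) (G : β → ℝ) :
    (pi p).expect (fun f => G (f i)) = (p i).expect G := by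
  simp [expect_pi_splitAt p i, Equiv.funSplitAt_symm_apply, expect_const]

end Pi

noncomputable def normalize (w : α → ℝ) (hw : ∀ a, 0 ≤ w a) (p₀ : FinPMF α) : FinPMF α :=
  if h : 0 < ∑ a, w a then
    ⟨fun a => w a / ∑ b, w b, fun a => div_nonneg (hw a) h.le, by
      rw [← Finset.sum_div, div_self h.ne']⟩
  else p₀

theorem normalize_p_of_pos {w : α → ℝ} (hw : ∀ a, 0 ≤ w a) (p₀ : FinPMF α)
    (h : 0 < ∑ a, w a) (a : α) : (normalize w hw p₀).p a = w a / ∑ b, w b := by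
  simp [normalize, h]

end FinPMF

theorem sum_pos_of_pos {ι : Type} [Fintype ι] {f : ι → ℝ} (hf : ∀ i, 0 ≤ f i) {i : ι}
    (hi : 0 < f i) : 0 < ∑ j, f j :=
  Finset.sum_pos' (fun j _ => hf j) ⟨i, mem_univ i, hi⟩

theorem sum_sum_pos_of_pos {ι κ : Type} [Fintype ι] [Fintype κ] {f : ι → κ → ℝ}
    (hf : ∀ i j, 0 ≤ f i j) {i : ι} {j : κ} (hij : 0 < f i j) : 0 < ∑ i, ∑ j, f i j :=
  sum_pos_of_pos (fun i => Finset.sum_nonneg fun j _ => hf i j) (sum_pos_of_pos (hf i) hij)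

theorem two_rpow_neg_logb_sub_logb {u v : ℝ} (hu : 0 < u) (hv : 0 < v) :
    (2 : ℝ) ^ (-Real.logb 2 u - Real.logb 2 v) = (u * v)⁻¹ := by
  rw [← neg_add', ← Real.logb_mul hu.ne' hv.ne', Real.rpow_neg zero_le_two,
    Real.rpow_logb zero_lt_two (by norm_num) (mul_pos hu hv)]

section Marginals

variable (qS : FinPMF (S1 × S2)) (qT : FinPMF T)
  (qX1 : S1 → T → FinPMF X1) (qX2 : S2 → T → FinPMF X2) (Wch : X1 → X2 → FinPMF Y)

noncomputable def avgChan1 (s1 : S1) (t : T) (x2 : X2) (y : Y) : ℝ :=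
  (qX1 s1 t).expect fun x1 => (Wch x1 x2).p y

noncomputable def avgChan2 (s2 : S2) (t : T) (x1 : X1) (y : Y) : ℝ :=
  (qX2 s2 t).expect fun x2 => (Wch x1 x2).p y

noncomputable def avgChan12 (s1 : S1) (s2 : S2) (t : T) (y : Y) : ℝ :=
  (qX1 s1 t).expect fun x1 => avgChan2 qX2 Wch s2 t x1 y

-- Divided by `q(s) W(y|x₁,x₂)`, these are the four exponentials `2^{h - i}` of the bound.
noncomputable def confusion1 (s2 : S2) (t : T) (x2 : X2) (y : Y) : ℝ :=
  ∑ s1, qS.p (s1, s2) * avgChan1 qX1 Wch s1 t x2 y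

noncomputable def confusion2 (s1 : S1) (t : T) (x1 : X1) (y : Y) : ℝ :=
  ∑ s2, qS.p (s1, s2) * avgChan2 qX2 Wch s2 t x1 y

noncomputable def confusion12 (k1 : S1 → K) (k : K) (t : T) (y : Y) : ℝ :=
  ∑ s1, ∑ s2, ind (k1 s1 = k) * qS.p (s1, s2) * avgChan12 qX1 qX2 Wch s1 s2 t y

noncomputable def confusionK (y : Y) : ℝ :=
  ∑ s1, ∑ s2, qS.p (s1, s2) * qT.expect fun t => avgChan12 qX1 qX2 Wch s1 s2 t y

theorem avgChan1_nonneg {S1 T X2 : Type} (qX1 : S1 → T → FinPMF X1) (Wch : X1 → X2 → FinPMF Y)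
    (s1 : S1) (t : T) (x2 : X2) (y : Y) : 0 ≤ avgChan1 qX1 Wch s1 t x2 y :=
  FinPMF.expect_nonneg _ fun _ => (Wch _ _).nonneg _

theorem avgChan2_nonneg {S2 T X1 : Type} (qX2 : S2 → T → FinPMF X2) (Wch : X1 → X2 → FinPMF Y)
    (s2 : S2) (t : T) (x1 : X1) (y : Y) : 0 ≤ avgChan2 qX2 Wch s2 t x1 y :=
  FinPMF.expect_nonneg _ fun _ => (Wch _ _).nonneg _

theorem avgChan12_nonneg {S1 S2 T : Type} (qX1 : S1 → T → FinPMF X1) (qX2 : S2 → T → FinPMF X2)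
    (Wch : X1 → X2 → FinPMF Y) (s1 : S1) (s2 : S2) (t : T) (y : Y) :
    0 ≤ avgChan12 qX1 qX2 Wch s1 s2 t y :=
  FinPMF.expect_nonneg _ fun _ => avgChan2_nonneg _ _ _ _ _ _

theorem avgChan1_pos {S1 T X2 : Type} (qX1 : S1 → T → FinPMF X1) (Wch : X1 → X2 → FinPMF Y)
    {s1 : S1} {t : T} {x1 : X1} {x2 : X2} {y : Y} (h1 : 0 < (qX1 s1 t).p x1)
    (hW : 0 < (Wch x1 x2).p y) : 0 < avgChan1 qX1 Wch s1 t x2 y :=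
  FinPMF.expect_pos _ (fun _ => (Wch _ _).nonneg _) h1 hW

theorem avgChan2_pos {S2 T X1 : Type} (qX2 : S2 → T → FinPMF X2) (Wch : X1 → X2 → FinPMF Y)
    {s2 : S2} {t : T} {x1 : X1} {x2 : X2} {y : Y} (h2 : 0 < (qX2 s2 t).p x2)
    (hW : 0 < (Wch x1 x2).p y) : 0 < avgChan2 qX2 Wch s2 t x1 y :=
  FinPMF.expect_pos _ (fun _ => (Wch _ _).nonneg _) h2 hW

theorem avgChan12_pos {S1 S2 T : Type} (qX1 : S1 → T → FinPMF X1) (qX2 : S2 → T → FinPMF X2)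
    (Wch : X1 → X2 → FinPMF Y) {s1 : S1} {s2 : S2} {t : T} {x1 : X1} {x2 : X2} {y : Y}
    (h1 : 0 < (qX1 s1 t).p x1) (h2 : 0 < (qX2 s2 t).p x2) (hW : 0 < (Wch x1 x2).p y) :
    0 < avgChan12 qX1 qX2 Wch s1 s2 t y :=
  FinPMF.expect_pos _ (fun _ => avgChan2_nonneg _ _ _ _ _ _) h1 (avgChan2_pos qX2 Wch h2 hW)

theorem qMAC_nonneg (s1 : S1) (s2 : S2) (t : T) (x1 : X1) (x2 : X2) (y : Y) :
    0 ≤ qMAC qS qT qX1 qX2 Wch s1 s2 t x1 x2 y := by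
  unfold qMAC
  have := qS.nonneg (s1, s2); have := qT.nonneg t; have := (qX1 s1 t).nonneg x1
  have := (qX2 s2 t).nonneg x2; have := (Wch x1 x2).nonneg y
  positivity

theorem qMAC_pos_iff {s1 : S1} {s2 : S2} {t : T} {x1 : X1} {x2 : X2} {y : Y} :
    0 < qMAC qS qT qX1 qX2 Wch s1 s2 t x1 x2 y ↔ 0 < qS.p (s1, s2) ∧ 0 < qT.p t ∧
      0 < (qX1 s1 t).p x1 ∧ 0 < (qX2 s2 t).p x2 ∧ 0 < (Wch x1 x2).p y := by
  constructor
  · intro h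
    have h' := h.ne'
    simp only [qMAC, ne_eq, mul_eq_zero, not_or] at h'
    obtain ⟨⟨⟨⟨hs, ht⟩, h1⟩, h2⟩, hW⟩ := h'
    exact ⟨(qS.nonneg _).lt_of_ne' hs, (qT.nonneg _).lt_of_ne' ht,
      ((qX1 _ _).nonneg _).lt_of_ne' h1, ((qX2 _ _).nonneg _).lt_of_ne' h2,
      ((Wch _ _).nonneg _).lt_of_ne' hW⟩
  · rintro ⟨hs, ht, h1, h2, hW⟩
    unfold qMAC
    positivity

end Marginals

section Factorization

variable (qS : FinPMF (S1 × S2)) (qT : FinPMF T)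
  (qX1 : S1 → T → FinPMF X1) (qX2 : S2 → T → FinPMF X2) (Wch : X1 → X2 → FinPMF Y)

theorem mX2S2T_eq (x2 : X2) (s2 : S2) (t : T) :
    mX2S2T qS qT qX1 qX2 Wch x2 s2 t = qT.p t * (qX2 s2 t).p x2 * mgS2 qS s2 := by
  simp only [mX2S2T, qMAC, mgS2, FinPMF.sum_const_mul, FinPMF.sum_const_mul_mul, Finset.mul_sum]
  exact Finset.sum_congr rfl fun _ _ => by ring

theorem mYX2S2T_eq (y : Y) (x2 : X2) (s2 : S2) (t : T) :
    mYX2S2T qS qT qX1 qX2 Wch y x2 s2 t =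
      qT.p t * (qX2 s2 t).p x2 * confusion1 qS qX1 Wch s2 t x2 y := by
  simp only [mYX2S2T, qMAC, confusion1, avgChan1, FinPMF.expect, Finset.mul_sum]
  exact Finset.sum_congr rfl fun _ _ => Finset.sum_congr rfl fun _ _ => by ring

theorem mYX1X2S2T_eq (y : Y) (x1 : X1) (x2 : X2) (s2 : S2) (t : T) :
    mYX1X2S2T qS qT qX1 qX2 Wch y x1 x2 s2 t =
      (Wch x1 x2).p y * mX1X2S2T qS qT qX1 qX2 Wch x1 x2 s2 t := by
  simp only [mYX1X2S2T, mX1X2S2T, qMAC, FinPMF.sum_const_mul, Finset.mul_sum]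
  exact Finset.sum_congr rfl fun _ _ => by ring

theorem mX1S1T_eq (x1 : X1) (s1 : S1) (t : T) :
    mX1S1T qS qT qX1 qX2 Wch x1 s1 t = qT.p t * (qX1 s1 t).p x1 * mgS1 qS s1 := by
  simp only [mX1S1T, qMAC, mgS1, FinPMF.sum_const_mul, Finset.mul_sum]
  exact Finset.sum_congr rfl fun _ _ => by ring

theorem mYX1S1T_eq (y : Y) (x1 : X1) (s1 : S1) (t : T) :
    mYX1S1T qS qT qX1 qX2 Wch y x1 s1 t =
      qT.p t * (qX1 s1 t).p x1 * confusion2 qS qX2 Wch s1 t x1 y := by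
  simp only [mYX1S1T, qMAC, confusion2, avgChan2, FinPMF.expect, Finset.mul_sum]
  exact Finset.sum_congr rfl fun _ _ => Finset.sum_congr rfl fun _ _ => by ring

theorem mYX1X2S1T_eq (y : Y) (x1 : X1) (x2 : X2) (s1 : S1) (t : T) :
    mYX1X2S1T qS qT qX1 qX2 Wch y x1 x2 s1 t =
      (Wch x1 x2).p y * mX1X2S1T qS qT qX1 qX2 Wch x1 x2 s1 t := by
  simp only [mYX1X2S1T, mX1X2S1T, qMAC, FinPMF.sum_const_mul, Finset.mul_sum]
  exact Finset.sum_congr rfl fun _ _ => by ring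

theorem mKT_eq {κ : Type} (k1 : S1 → κ) (k : κ) (t : T) :
    mKT qS qT qX1 qX2 Wch k1 k t = qT.p t * mgK qS k1 k := by
  simp only [mKT, qMAC, mgK, ← mul_assoc, FinPMF.sum_const_mul, Finset.mul_sum]
  exact Finset.sum_congr rfl fun _ _ => Finset.sum_congr rfl fun _ _ => by ring

theorem mYKT_eq {κ : Type} (k1 : S1 → κ) (y : Y) (k : κ) (t : T) :
    mYKT qS qT qX1 qX2 Wch k1 y k t = qT.p t * confusion12 qS qX1 qX2 Wch k1 k t y := by
  simp only [mYKT, qMAC, confusion12, avgChan12, avgChan2, FinPMF.expect, Finset.mul_sum]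
  exact Finset.sum_congr rfl fun _ _ => Finset.sum_congr rfl fun _ _ =>
    Finset.sum_congr rfl fun _ _ => Finset.sum_congr rfl fun _ _ => by ring

theorem mYX1X2KT_eq {κ : Type} (k1 : S1 → κ) (y : Y) (x1 : X1) (x2 : X2) (k : κ) (t : T) :
    mYX1X2KT qS qT qX1 qX2 Wch k1 y x1 x2 k t =
      (Wch x1 x2).p y * mX1X2KT qS qT qX1 qX2 Wch k1 x1 x2 k t := by
  simp only [mYX1X2KT, mX1X2KT, qMAC, ← mul_assoc, FinPMF.sum_const_mul, Finset.mul_sum]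
  exact Finset.sum_congr rfl fun _ _ => Finset.sum_congr rfl fun _ _ => by ring

theorem mY_eq (y : Y) : mY qS qT qX1 qX2 Wch y = confusionK qS qT qX1 qX2 Wch y := by
  simp only [mY, qMAC, confusionK, avgChan12, avgChan2, FinPMF.expect, Finset.mul_sum]
  exact Finset.sum_congr rfl fun _ _ => Finset.sum_congr rfl fun _ _ =>
    Finset.sum_congr rfl fun _ _ => Finset.sum_congr rfl fun _ _ =>
      Finset.sum_congr rfl fun _ _ => by ring

theorem mYX1X2_eq (y : Y) (x1 : X1) (x2 : X2) :
    mYX1X2 qS qT qX1 qX2 Wch y x1 x2 = (Wch x1 x2).p y * mX1X2 qS qT qX1 qX2 Wch x1 x2 := by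
  simp only [mYX1X2, mX1X2, qMAC, FinPMF.sum_const_mul, Finset.mul_sum]
  exact Finset.sum_congr rfl fun _ _ => Finset.sum_congr rfl fun _ _ =>
    Finset.sum_congr rfl fun _ _ => by ring

end Factorization

section Exponents

variable (qS : FinPMF (S1 × S2)) (qT : FinPMF T)
  (qX1 : S1 → T → FinPMF X1) (qX2 : S2 → T → FinPMF X2) (Wch : X1 → X2 → FinPMF Y)
  {s1 : S1} {s2 : S2} {t : T} {x1 : X1} {x2 : X2} {y : Y}

theorem two_rpow_hS1cS2_sub_iYX1cX2S2T (hq : 0 < qMAC qS qT qX1 qX2 Wch s1 s2 t x1 x2 y) :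
    (2 : ℝ) ^ (hS1cS2 qS s1 s2 - iYX1cX2S2T qS qT qX1 qX2 Wch y x1 x2 s2 t) =
      confusion1 qS qX1 Wch s2 t x2 y / (qS.p (s1, s2) * (Wch x1 x2).p y) := by
  obtain ⟨hs, ht, h1, h2, hW⟩ := (qMAC_pos_iff qS qT qX1 qX2 Wch).mp hq
  have hm : 0 < mX1X2S2T qS qT qX1 qX2 Wch x1 x2 s2 t := by
    refine pos_of_mul_pos_right (a := (Wch x1 x2).p y) ?_ hW.le
    rw [← mYX1X2S2T_eq]
    exact sum_pos_of_pos (fun _ => qMAC_nonneg ..) hq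
  have hg : 0 < mgS2 qS s2 := sum_pos_of_pos (fun _ => qS.nonneg _) hs
  have hc : 0 < confusion1 qS qX1 Wch s2 t x2 y :=
    sum_pos_of_pos (fun _ => mul_nonneg (qS.nonneg _) (avgChan1_nonneg ..))
      (mul_pos hs (avgChan1_pos qX1 Wch h1 hW))
  rw [hS1cS2, iYX1cX2S2T, mYX1X2S2T_eq, mX2S2T_eq, mYX2S2T_eq,
    two_rpow_neg_logb_sub_logb (by positivity) (by positivity)]
  field_simp

theorem two_rpow_hS2cS1_sub_iYX2cX1S1T (hq : 0 < qMAC qS qT qX1 qX2 Wch s1 s2 t x1 x2 y) :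
    (2 : ℝ) ^ (hS2cS1 qS s1 s2 - iYX2cX1S1T qS qT qX1 qX2 Wch y x1 x2 s1 t) =
      confusion2 qS qX2 Wch s1 t x1 y / (qS.p (s1, s2) * (Wch x1 x2).p y) := by
  obtain ⟨hs, ht, h1, h2, hW⟩ := (qMAC_pos_iff qS qT qX1 qX2 Wch).mp hq
  have hm : 0 < mX1X2S1T qS qT qX1 qX2 Wch x1 x2 s1 t := by
    refine pos_of_mul_pos_right (a := (Wch x1 x2).p y) ?_ hW.le
    rw [← mYX1X2S1T_eq]
    exact sum_pos_of_pos (fun _ => qMAC_nonneg ..) hq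
  have hg : 0 < mgS1 qS s1 := sum_pos_of_pos (fun _ => qS.nonneg _) hs
  have hc : 0 < confusion2 qS qX2 Wch s1 t x1 y :=
    sum_pos_of_pos (fun _ => mul_nonneg (qS.nonneg _) (avgChan2_nonneg ..))
      (mul_pos hs (avgChan2_pos qX2 Wch h2 hW))
  rw [hS2cS1, iYX2cX1S1T, mYX1X2S1T_eq, mX1S1T_eq, mYX1S1T_eq,
    two_rpow_neg_logb_sub_logb (by positivity) (by positivity)]
  field_simp

theorem two_rpow_hS1S2cK_sub_iYX1X2cKT {κ : Type} (k1 : S1 → κ)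
    (hq : 0 < qMAC qS qT qX1 qX2 Wch s1 s2 t x1 x2 y) :
    (2 : ℝ) ^ (hS1S2cK qS k1 s1 s2 - iYX1X2cKT qS qT qX1 qX2 Wch k1 y x1 x2 (k1 s1) t) =
      confusion12 qS qX1 qX2 Wch k1 (k1 s1) t y / (qS.p (s1, s2) * (Wch x1 x2).p y) := by
  obtain ⟨hs, ht, h1, h2, hW⟩ := (qMAC_pos_iff qS qT qX1 qX2 Wch).mp hq
  have hm : 0 < mX1X2KT qS qT qX1 qX2 Wch k1 x1 x2 (k1 s1) t := by
    refine pos_of_mul_pos_right (a := (Wch x1 x2).p y) ?_ hW.le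
    rw [← mYX1X2KT_eq]
    exact sum_sum_pos_of_pos (fun _ _ => mul_nonneg (ind_nonneg _) (qMAC_nonneg ..))
      (i := s1) (j := s2) (by rwa [ind_of rfl, one_mul])
  have hg : 0 < mgK qS k1 (k1 s1) :=
    sum_sum_pos_of_pos (fun _ _ => mul_nonneg (ind_nonneg _) (qS.nonneg _))
      (i := s1) (j := s2) (by rwa [ind_of rfl, one_mul])
  have hc : 0 < confusion12 qS qX1 qX2 Wch k1 (k1 s1) t y := by
    refine sum_sum_pos_of_pos (fun _ _ => mul_nonneg (mul_nonneg (ind_nonneg _) (qS.nonneg _))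
      (avgChan12_nonneg ..)) (i := s1) (j := s2) ?_
    rw [ind_of rfl, one_mul]
    exact mul_pos hs (avgChan12_pos qX1 qX2 Wch h1 h2 hW)
  rw [hS1S2cK, iYX1X2cKT, mYX1X2KT_eq, mKT_eq, mYKT_eq,
    two_rpow_neg_logb_sub_logb (by positivity) (by positivity)]
  field_simp

theorem two_rpow_hS1S2_sub_iYX1X2 (hq : 0 < qMAC qS qT qX1 qX2 Wch s1 s2 t x1 x2 y) :
    (2 : ℝ) ^ (hS1S2 qS s1 s2 - iYX1X2 qS qT qX1 qX2 Wch y x1 x2) =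
      confusionK qS qT qX1 qX2 Wch y / (qS.p (s1, s2) * (Wch x1 x2).p y) := by
  obtain ⟨hs, ht, h1, h2, hW⟩ := (qMAC_pos_iff qS qT qX1 qX2 Wch).mp hq
  have hm : 0 < mX1X2 qS qT qX1 qX2 Wch x1 x2 := by
    refine pos_of_mul_pos_right (a := (Wch x1 x2).p y) ?_ hW.le
    rw [← mYX1X2_eq]
    exact sum_sum_pos_of_pos (fun _ _ => Finset.sum_nonneg fun _ _ => qMAC_nonneg ..)
      (sum_pos_of_pos (fun _ => qMAC_nonneg ..) hq)
  have hc : 0 < confusionK qS qT qX1 qX2 Wch y :=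
    sum_sum_pos_of_pos (fun _ _ => mul_nonneg (qS.nonneg _)
      (FinPMF.expect_nonneg _ fun _ => avgChan12_nonneg ..)) (mul_pos hs
        (FinPMF.expect_pos _ (fun _ => avgChan12_nonneg ..) ht
          (avgChan12_pos qX1 qX2 Wch h1 h2 hW)))
  rw [hS1S2, iYX1X2, mYX1X2_eq, mY_eq, two_rpow_neg_logb_sub_logb hs (by positivity)]
  field_simp

theorem qMAC_mul_inv_eq {κ : Type} (k1 : S1 → κ) (hq : 0 < qMAC qS qT qX1 qX2 Wch s1 s2 t x1 x2 y) :
    qMAC qS qT qX1 qX2 Wch s1 s2 t x1 x2 y *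
      (1 + (2 : ℝ) ^ (hS1cS2 qS s1 s2 - iYX1cX2S2T qS qT qX1 qX2 Wch y x1 x2 s2 t)
        + (2 : ℝ) ^ (hS2cS1 qS s1 s2 - iYX2cX1S1T qS qT qX1 qX2 Wch y x1 x2 s1 t)
        + (2 : ℝ) ^ (hS1S2cK qS k1 s1 s2 - iYX1X2cKT qS qT qX1 qX2 Wch k1 y x1 x2 (k1 s1) t)
        + (2 : ℝ) ^ (hS1S2 qS s1 s2 - iYX1X2 qS qT qX1 qX2 Wch y x1 x2))⁻¹ =
      qT.p t * (qX1 s1 t).p x1 * (qX2 s2 t).p x2 *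
        (qS.p (s1, s2) * (Wch x1 x2).p y * (qS.p (s1, s2) * (Wch x1 x2).p y *
          (qS.p (s1, s2) * (Wch x1 x2).p y + (confusion1 qS qX1 Wch s2 t x2 y +
            confusion2 qS qX2 Wch s1 t x1 y + confusion12 qS qX1 qX2 Wch k1 (k1 s1) t y +
              confusionK qS qT qX1 qX2 Wch y))⁻¹)) := by
  obtain ⟨hs, -, -, -, hW⟩ := (qMAC_pos_iff qS qT qX1 qX2 Wch).mp hq
  rw [two_rpow_hS1cS2_sub_iYX1cX2S2T _ _ _ _ _ hq, two_rpow_hS2cS1_sub_iYX2cX1S1T _ _ _ _ _ hq,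
    two_rpow_hS1S2cK_sub_iYX1X2cKT _ _ _ _ _ _ hq, two_rpow_hS1S2_sub_iYX1X2 _ _ _ _ _ hq]
  unfold qMAC
  field_simp
  ring

end Exponents

section Interference

variable (qS : FinPMF (S1 × S2)) (qT : FinPMF T)
  (qX1 : S1 → T → FinPMF X1) (qX2 : S2 → T → FinPMF X2) (Wch : X1 → X2 → FinPMF Y)
  {κ : Type} (k1 : S1 → κ) (s : S1 × S2) (t : T) (x1 : X1) (x2 : X2) (y : Y)

/-- One term per error event: only `ŝ₁` wrong, only `ŝ₂` wrong, both wrong with the common part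
of `s`, and a different common part. -/
noncomputable def interferenceBound (ŝ : S1 × S2) : ℝ :=
  ind (ŝ.2 = s.2) * avgChan1 qX1 Wch ŝ.1 t x2 y + ind (ŝ.1 = s.1) * avgChan2 qX2 Wch ŝ.2 t x1 y +
    ind (k1 ŝ.1 = k1 s.1) * avgChan12 qX1 qX2 Wch ŝ.1 ŝ.2 t y +
      qT.expect fun t' => avgChan12 qX1 qX2 Wch ŝ.1 ŝ.2 t' y

theorem sum_mul_interferenceBound :
    ∑ ŝ, qS.p ŝ * interferenceBound qT qX1 qX2 Wch k1 s t x1 x2 y ŝ =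
      confusion1 qS qX1 Wch s.2 t x2 y + confusion2 qS qX2 Wch s.1 t x1 y +
        confusion12 qS qX1 qX2 Wch k1 (k1 s.1) t y + confusionK qS qT qX1 qX2 Wch y := by
  simp only [interferenceBound, mul_add, Finset.sum_add_distrib, Fintype.sum_prod_type]
  have e1 : ∑ a, ∑ b, qS.p (a, b) * (ind (b = s.2) * avgChan1 qX1 Wch a t x2 y) =
      confusion1 qS qX1 Wch s.2 t x2 y := by
    refine Finset.sum_congr rfl fun a _ => ?_
    simp only [mul_left_comm (qS.p _) (ind _)]
    exact sum_ind_eq_mul s.2 _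
  have e2 : ∑ a, ∑ b, qS.p (a, b) * (ind (a = s.1) * avgChan2 qX2 Wch b t x1 y) =
      confusion2 qS qX2 Wch s.1 t x1 y := by
    rw [Finset.sum_comm]
    refine Finset.sum_congr rfl fun b _ => ?_
    simp only [mul_left_comm (qS.p _) (ind _)]
    exact sum_ind_eq_mul s.1 fun a => qS.p (a, b) * avgChan2 qX2 Wch b t x1 y
  have e3 : ∑ a, ∑ b, qS.p (a, b) * (ind (k1 a = k1 s.1) * avgChan12 qX1 qX2 Wch a b t y) =
      confusion12 qS qX1 qX2 Wch k1 (k1 s.1) t y :=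
    Finset.sum_congr rfl fun _ _ => Finset.sum_congr rfl fun _ _ => by ring
  rw [e1, e2, e3, confusionK]

end Interference

theorem pCorrectMAC_pure (qS : FinPMF (S1 × S2)) (Wch : X1 → X2 → FinPMF Y) (e1 : S1 → X1)
    (e2 : S2 → X2) (dec : Y → FinPMF (S1 × S2)) :
    pCorrectMAC qS Wch (fun s1 => FinPMF.pure (e1 s1)) (fun s2 => FinPMF.pure (e2 s2)) dec =
      ∑ s1, ∑ s2, ∑ y, qS.p (s1, s2) * (Wch (e1 s1) (e2 s2)).p y * (dec y).p (s1, s2) := by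
  refine Finset.sum_congr rfl fun s1 _ => Finset.sum_congr rfl fun s2 _ => ?_
  have factor : ∀ x1 x2, ∑ y, qS.p (s1, s2) * (FinPMF.pure (e1 s1)).p x1 *
      (FinPMF.pure (e2 s2)).p x2 * (Wch x1 x2).p y * (dec y).p (s1, s2) =
        ind (x1 = e1 s1) * (ind (x2 = e2 s2) *
          ∑ y, qS.p (s1, s2) * (Wch x1 x2).p y * (dec y).p (s1, s2)) := fun x1 x2 => by
    simp only [FinPMF.pure, Finset.mul_sum]
    exact Finset.sum_congr rfl fun _ _ => by ring
  simp only [factor, ← Finset.mul_sum, sum_ind_eq_mul]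

/-- A codebook: a time-sharing symbol for each value of the common part, and for each encoder a
table of codewords indexed by source symbol and time-sharing symbol. -/
abbrev Codebook (K T S1 S2 X1 X2 : Type) : Type := (K → T) × (S1 × T → X1) × (S2 × T → X2)

namespace Codebook

variable {S1 S2 K T X1 X2 Y : Type}

def word1 (k1 : S1 → K) (ω : Codebook K T S1 S2 X1 X2) (s1 : S1) : X1 := ω.2.1 (s1, ω.1 (k1 s1))

def word2 (k2 : S2 → K) (ω : Codebook K T S1 S2 X1 X2) (s2 : S2) : X2 := ω.2.2 (s2, ω.1 (k2 s2))

noncomputable def entryInd (k1 : S1 → K) (s : S1 × S2) (t : T) (x1 : X1) (x2 : X2)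
    (ω : Codebook K T S1 S2 X1 X2) : ℝ :=
  ind (ω.1 (k1 s.1) = t) * ind (ω.2.1 (s.1, t) = x1) * ind (ω.2.2 (s.2, t) = x2)

theorem sum_entryInd [Fintype T] [Fintype X1] [Fintype X2] (k1 : S1 → K) (s : S1 × S2)
    (ω : Codebook K T S1 S2 X1 X2) : ∑ t, ∑ x1, ∑ x2, entryInd k1 s t x1 x2 ω = 1 := by
  simp only [entryInd, ← Finset.mul_sum, sum_ind_eq, mul_one]

theorem entryInd_nonneg (k1 : S1 → K) (s : S1 × S2) (t : T) (x1 : X1) (x2 : X2)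
    (ω : Codebook K T S1 S2 X1 X2) : 0 ≤ entryInd k1 s t x1 x2 ω :=
  mul_nonneg (mul_nonneg (ind_nonneg _) (ind_nonneg _)) (ind_nonneg _)

def setEntries [DecidableEq K] [DecidableEq S1] [DecidableEq S2] [DecidableEq T] (k1 : S1 → K)
    (s : S1 × S2) (t : T) (x1 : X1) (x2 : X2) (ω : Codebook K T S1 S2 X1 X2) :
    Codebook K T S1 S2 X1 X2 :=
  (update ω.1 (k1 s.1) t, update ω.2.1 (s.1, t) x1, update ω.2.2 (s.2, t) x2)

section Decoder

variable [Fintype S1] [Fintype S2] [Fintype Y]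
  (qS : FinPMF (S1 × S2)) (Wch : X1 → X2 → FinPMF Y) (k1 : S1 → K) (k2 : S2 → K)

noncomputable def chanOut (ω : Codebook K T S1 S2 X1 X2) (y : Y) (s : S1 × S2) : ℝ :=
  (Wch (word1 k1 ω s.1) (word2 k2 ω s.2)).p y

noncomputable def likelihood (ω : Codebook K T S1 S2 X1 X2) (y : Y) (s : S1 × S2) : ℝ :=
  qS.p s * chanOut Wch k1 k2 ω y s

theorem likelihood_nonneg (ω : Codebook K T S1 S2 X1 X2) (y : Y) (s : S1 × S2) :
    0 ≤ likelihood qS Wch k1 k2 ω y s :=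
  mul_nonneg (qS.nonneg _) ((Wch _ _).nonneg _)

noncomputable def decoder (ω : Codebook K T S1 S2 X1 X2) (y : Y) : FinPMF (S1 × S2) :=
  FinPMF.normalize (likelihood qS Wch k1 k2 ω y) (likelihood_nonneg qS Wch k1 k2 ω y) qS

theorem likelihood_mul_decoder_setEntries [DecidableEq K] [DecidableEq S1] [DecidableEq S2]
    [DecidableEq T] {s : S1 × S2} {t : T} {x1 : X1} {x2 : X2} {y : Y}
    (hkk : k2 s.2 = k1 s.1) (hZ : 0 < qS.p s * (Wch x1 x2).p y) (ω : Codebook K T S1 S2 X1 X2) :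
    likelihood qS Wch k1 k2 (setEntries k1 s t x1 x2 ω) y s *
        (decoder qS Wch k1 k2 (setEntries k1 s t x1 x2 ω) y).p s =
      qS.p s * (Wch x1 x2).p y * (qS.p s * (Wch x1 x2).p y *
        (qS.p s * (Wch x1 x2).p y +
          ∑ ŝ ∈ univ.erase s, likelihood qS Wch k1 k2 (setEntries k1 s t x1 x2 ω) y ŝ)⁻¹) := by
  have hs : likelihood qS Wch k1 k2 (setEntries k1 s t x1 x2 ω) y s = qS.p s * (Wch x1 x2).p y := by
    simp [likelihood, chanOut, word1, word2, setEntries, hkk]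
  have hsum : ∑ ŝ, likelihood qS Wch k1 k2 (setEntries k1 s t x1 x2 ω) y ŝ =
      qS.p s * (Wch x1 x2).p y +
        ∑ ŝ ∈ univ.erase s, likelihood qS Wch k1 k2 (setEntries k1 s t x1 x2 ω) y ŝ := by
    rw [← Finset.add_sum_erase _ _ (mem_univ s), hs]
  have hJ : 0 ≤ ∑ ŝ ∈ univ.erase s, likelihood qS Wch k1 k2 (setEntries k1 s t x1 x2 ω) y ŝ :=
    Finset.sum_nonneg fun _ _ => likelihood_nonneg ..
  have hpos : 0 < ∑ ŝ, likelihood qS Wch k1 k2 (setEntries k1 s t x1 x2 ω) y ŝ := by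
    rw [hsum]; positivity
  rw [decoder, FinPMF.normalize_p_of_pos _ _ hpos, hsum, hs, div_eq_mul_inv]

end Decoder

end Codebook

section RandomCodebook

variable [DecidableEq K] [DecidableEq S1] [DecidableEq S2] [DecidableEq T]

noncomputable def codebookPMF (qT : FinPMF T) (qX1 : S1 → T → FinPMF X1)
    (qX2 : S2 → T → FinPMF X2) : FinPMF (Codebook K T S1 S2 X1 X2) :=
  (FinPMF.pi fun _ => qT).prod
    ((FinPMF.pi fun a : S1 × T => qX1 a.1 a.2).prod (FinPMF.pi fun a : S2 × T => qX2 a.1 a.2))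

variable (qS : FinPMF (S1 × S2)) (qT : FinPMF T) (qX1 : S1 → T → FinPMF X1)
  (qX2 : S2 → T → FinPMF X2) (Wch : X1 → X2 → FinPMF Y) (k1 : S1 → K) (k2 : S2 → K)

theorem expect_codebookPMF (F : Codebook K T S1 S2 X1 X2 → ℝ) :
    (codebookPMF qT qX1 qX2).expect F =
      (FinPMF.pi fun _ : K => qT).expect fun τ =>
        (FinPMF.pi fun a : S1 × T => qX1 a.1 a.2).expect fun f1 =>
          (FinPMF.pi fun a : S2 × T => qX2 a.1 a.2).expect fun f2 => F (τ, f1, f2) := by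
  simp only [codebookPMF, FinPMF.expect_prod]

theorem expect_entryInd_mul (s : S1 × S2) (t : T) (x1 : X1) (x2 : X2)
    (F : Codebook K T S1 S2 X1 X2 → ℝ) :
    (codebookPMF qT qX1 qX2).expect (fun ω => Codebook.entryInd k1 s t x1 x2 ω * F ω) =
      qT.p t * (qX1 s.1 t).p x1 * (qX2 s.2 t).p x2 *
        (codebookPMF qT qX1 qX2).expect fun ω => F (Codebook.setEntries k1 s t x1 x2 ω) := by
  simp only [expect_codebookPMF, Codebook.entryInd, Codebook.setEntries, mul_assoc,
    FinPMF.expect_const_mul, FinPMF.expect_pi_ind_mul]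

theorem expect_codebookPMF_entries (a1 : S1 × T) (a2 : S2 × T) (G : X1 → X2 → ℝ) :
    (codebookPMF (K := K) qT qX1 qX2).expect (fun ω => G (ω.2.1 a1) (ω.2.2 a2)) =
      (qX1 a1.1 a1.2).expect fun x1 => (qX2 a2.1 a2.2).expect fun x2 => G x1 x2 := by
  simp only [expect_codebookPMF, FinPMF.expect_pi_apply, FinPMF.expect_const]
  exact FinPMF.expect_pi_apply _ a1 fun x1 => (qX2 a2.1 a2.2).expect (G x1)

theorem expect_codebookPMF_words (k : K) (s1 : S1) (s2 : S2) (G : X1 → X2 → ℝ) :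
    (codebookPMF qT qX1 qX2).expect (fun ω => G (ω.2.1 (s1, ω.1 k)) (ω.2.2 (s2, ω.1 k))) =
      qT.expect fun t => (qX1 s1 t).expect fun x1 => (qX2 s2 t).expect fun x2 => G x1 x2 := by
  simp only [expect_codebookPMF, FinPMF.expect_pi_apply]
  have inner : ∀ τ : K → T, ((FinPMF.pi fun a : S1 × T => qX1 a.1 a.2).expect fun f1 =>
      (qX2 s2 (τ k)).expect (G (f1 (s1, τ k)))) =
        (qX1 s1 (τ k)).expect fun x1 => (qX2 s2 (τ k)).expect (G x1) := fun τ =>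
    FinPMF.expect_pi_apply _ (s1, τ k) fun x1 => (qX2 s2 (τ k)).expect (G x1)
  simp only [inner]
  exact FinPMF.expect_pi_apply _ k fun t => (qX1 s1 t).expect fun x1 => (qX2 s2 t).expect (G x1)

section SetEntries

variable {s : S1 × S2} {t : T} {x1 : X1} {x2 : X2} {y : Y}

theorem expect_chanOut_setEntries_of_fst_eq {ŝ : S1 × S2} (h1 : ŝ.1 = s.1) (h2 : ŝ.2 ≠ s.2)
    (hk : k2 ŝ.2 = k1 s.1) :
    (codebookPMF qT qX1 qX2).expect (fun ω =>
      Codebook.chanOut Wch k1 k2 (Codebook.setEntries k1 s t x1 x2 ω) y ŝ) =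
        avgChan2 qX2 Wch ŝ.2 t x1 y := by
  simp only [Codebook.chanOut, Codebook.word1, Codebook.word2, Codebook.setEntries, h1, hk,
    update_self, ne_eq, Prod.mk.injEq, h2, and_true, not_false_eq_true, update_of_ne]
  exact (expect_codebookPMF_entries qT qX1 qX2 (s.1, t) (ŝ.2, t) fun _ x2 => (Wch x1 x2).p y).trans
    (FinPMF.expect_const _ _)

theorem expect_chanOut_setEntries_of_snd_eq {ŝ : S1 × S2} (h1 : ŝ.1 ≠ s.1) (h2 : ŝ.2 = s.2)
    (hk : k1 ŝ.1 = k1 s.1) (hkk : k2 s.2 = k1 s.1) :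
    (codebookPMF qT qX1 qX2).expect (fun ω =>
      Codebook.chanOut Wch k1 k2 (Codebook.setEntries k1 s t x1 x2 ω) y ŝ) =
        avgChan1 qX1 Wch ŝ.1 t x2 y := by
  simp only [Codebook.chanOut, Codebook.word1, Codebook.word2, Codebook.setEntries, hk, hkk,
    update_self, ne_eq, Prod.mk.injEq, h1, h2, and_true, not_false_eq_true, update_of_ne]
  exact (expect_codebookPMF_entries qT qX1 qX2 (ŝ.1, t) (s.2, t) fun x1 _ => (Wch x1 x2).p y).trans
    (by simp only [FinPMF.expect_const]; rfl)

theorem expect_chanOut_setEntries_of_same_key {ŝ : S1 × S2} (h1 : ŝ.1 ≠ s.1) (h2 : ŝ.2 ≠ s.2)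
    (hk1 : k1 ŝ.1 = k1 s.1) (hk2 : k2 ŝ.2 = k1 s.1) :
    (codebookPMF qT qX1 qX2).expect (fun ω =>
      Codebook.chanOut Wch k1 k2 (Codebook.setEntries k1 s t x1 x2 ω) y ŝ) =
        avgChan12 qX1 qX2 Wch ŝ.1 ŝ.2 t y := by
  simp only [Codebook.chanOut, Codebook.word1, Codebook.word2, Codebook.setEntries, hk1, hk2,
    update_self, ne_eq, Prod.mk.injEq, h1, h2, and_true, not_false_eq_true, update_of_ne]
  exact expect_codebookPMF_entries qT qX1 qX2 (ŝ.1, t) (ŝ.2, t) fun x1 x2 => (Wch x1 x2).p y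

theorem expect_chanOut_setEntries_of_new_key {ŝ : S1 × S2} (h1 : ŝ.1 ≠ s.1) (h2 : ŝ.2 ≠ s.2)
    (hk1 : k1 ŝ.1 ≠ k1 s.1) (hk2 : k2 ŝ.2 = k1 ŝ.1) :
    (codebookPMF qT qX1 qX2).expect (fun ω =>
      Codebook.chanOut Wch k1 k2 (Codebook.setEntries k1 s t x1 x2 ω) y ŝ) =
        qT.expect fun t' => avgChan12 qX1 qX2 Wch ŝ.1 ŝ.2 t' y := by
  simp only [Codebook.chanOut, Codebook.word1, Codebook.word2, Codebook.setEntries, hk1, hk2,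
    ne_eq, not_false_eq_true, update_of_ne, Prod.mk.injEq, h1, h2, false_and]
  exact expect_codebookPMF_words qT qX1 qX2 (k1 ŝ.1) ŝ.1 ŝ.2 fun x1 x2 => (Wch x1 x2).p y

theorem expect_likelihood_setEntries_le (hk : ∀ s1 s2, 0 < qS.p (s1, s2) → k1 s1 = k2 s2)
    (hkk : k2 s.2 = k1 s.1) {ŝ : S1 × S2} (hne : ŝ ≠ s) :
    (codebookPMF qT qX1 qX2).expect (fun ω =>
      Codebook.likelihood qS Wch k1 k2 (Codebook.setEntries k1 s t x1 x2 ω) y ŝ) ≤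
        qS.p ŝ * interferenceBound qT qX1 qX2 Wch k1 s t x1 x2 y ŝ := by
  rcases (qS.nonneg ŝ).eq_or_lt with h0 | hpos
  · simp only [Codebook.likelihood, ← h0, zero_mul, FinPMF.expect_const, le_refl]
  have hkŝ : k2 ŝ.2 = k1 ŝ.1 := (hk ŝ.1 ŝ.2 hpos).symm
  simp only [Codebook.likelihood]
  rw [FinPMF.expect_const_mul]
  refine mul_le_mul_of_nonneg_left ?_ hpos.le
  have hA1 := avgChan1_nonneg qX1 Wch ŝ.1 t x2 y
  have hA2 := avgChan2_nonneg qX2 Wch ŝ.2 t x1 y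
  have hA12 := avgChan12_nonneg qX1 qX2 Wch ŝ.1 ŝ.2 t y
  have hE := FinPMF.expect_nonneg qT fun t' => avgChan12_nonneg qX1 qX2 Wch ŝ.1 ŝ.2 t' y
  unfold interferenceBound
  by_cases h1 : ŝ.1 = s.1
  · have h2 : ŝ.2 ≠ s.2 := fun h2 => hne (Prod.ext h1 h2)
    rw [expect_chanOut_setEntries_of_fst_eq qT qX1 qX2 Wch k1 k2 h1 h2
      (hkŝ.trans (congrArg k1 h1)), ind_of h1, ind_of_not h2, ind_of (congrArg k1 h1)]
    linarith
  by_cases hk1 : k1 ŝ.1 = k1 s.1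
  · by_cases h2 : ŝ.2 = s.2
    · rw [expect_chanOut_setEntries_of_snd_eq qT qX1 qX2 Wch k1 k2 h1 h2 hk1 hkk, ind_of h2,
        ind_of_not h1, ind_of hk1]
      linarith
    · rw [expect_chanOut_setEntries_of_same_key qT qX1 qX2 Wch k1 k2 h1 h2 hk1 (hkŝ.trans hk1),
        ind_of_not h1, ind_of_not h2, ind_of hk1]
      linarith
  · have h2 : ŝ.2 ≠ s.2 := fun h2 => hk1 (by rw [← hkŝ, h2, hkk])
    rw [expect_chanOut_setEntries_of_new_key qT qX1 qX2 Wch k1 k2 h1 h2 hk1 hkŝ, ind_of_not h1,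
      ind_of_not h2, ind_of_not hk1]
    linarith

theorem expect_interference_le (hk : ∀ s1 s2, 0 < qS.p (s1, s2) → k1 s1 = k2 s2)
    (hkk : k2 s.2 = k1 s.1) :
    (codebookPMF qT qX1 qX2).expect (fun ω => ∑ ŝ ∈ univ.erase s,
      Codebook.likelihood qS Wch k1 k2 (Codebook.setEntries k1 s t x1 x2 ω) y ŝ) ≤
        confusion1 qS qX1 Wch s.2 t x2 y + confusion2 qS qX2 Wch s.1 t x1 y +
          confusion12 qS qX1 qX2 Wch k1 (k1 s.1) t y + confusionK qS qT qX1 qX2 Wch y := by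
  have hbound : ∀ ŝ, 0 ≤ interferenceBound qT qX1 qX2 Wch k1 s t x1 x2 y ŝ := fun ŝ => by
    have := avgChan1_nonneg qX1 Wch ŝ.1 t x2 y
    have := avgChan2_nonneg qX2 Wch ŝ.2 t x1 y
    have := avgChan12_nonneg qX1 qX2 Wch ŝ.1 ŝ.2 t y
    have := FinPMF.expect_nonneg qT fun t' => avgChan12_nonneg qX1 qX2 Wch ŝ.1 ŝ.2 t' y
    have := ind_nonneg (ŝ.2 = s.2); have := ind_nonneg (ŝ.1 = s.1)
    have := ind_nonneg (k1 ŝ.1 = k1 s.1)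
    unfold interferenceBound
    positivity
  rw [FinPMF.expect_sum, ← sum_mul_interferenceBound]
  calc _ ≤ ∑ ŝ ∈ univ.erase s, qS.p ŝ * interferenceBound qT qX1 qX2 Wch k1 s t x1 x2 y ŝ :=
        Finset.sum_le_sum fun ŝ hŝ => expect_likelihood_setEntries_le qS qT qX1 qX2 Wch k1 k2 hk hkk
          (Finset.ne_of_mem_erase hŝ)
    _ ≤ _ := Finset.sum_le_sum_of_subset_of_nonneg (Finset.subset_univ _) fun ŝ _ _ =>
        mul_nonneg (qS.nonneg ŝ) (hbound ŝ)

end SetEntries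

theorem qMAC_mul_inv_le_expect (hk : ∀ s1 s2, 0 < qS.p (s1, s2) → k1 s1 = k2 s2)
    (s1 : S1) (s2 : S2) (t : T) (x1 : X1) (x2 : X2) (y : Y) :
    qMAC qS qT qX1 qX2 Wch s1 s2 t x1 x2 y *
      (1 + (2 : ℝ) ^ (hS1cS2 qS s1 s2 - iYX1cX2S2T qS qT qX1 qX2 Wch y x1 x2 s2 t)
        + (2 : ℝ) ^ (hS2cS1 qS s1 s2 - iYX2cX1S1T qS qT qX1 qX2 Wch y x1 x2 s1 t)
        + (2 : ℝ) ^ (hS1S2cK qS k1 s1 s2 - iYX1X2cKT qS qT qX1 qX2 Wch k1 y x1 x2 (k1 s1) t)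
        + (2 : ℝ) ^ (hS1S2 qS s1 s2 - iYX1X2 qS qT qX1 qX2 Wch y x1 x2))⁻¹ ≤
      (codebookPMF qT qX1 qX2).expect fun ω => Codebook.entryInd k1 (s1, s2) t x1 x2 ω *
        (Codebook.likelihood qS Wch k1 k2 ω y (s1, s2) *
          (Codebook.decoder qS Wch k1 k2 ω y).p (s1, s2)) := by
  rcases (qMAC_nonneg qS qT qX1 qX2 Wch s1 s2 t x1 x2 y).eq_or_lt with h0 | hq
  · rw [← h0, zero_mul]
    exact FinPMF.expect_nonneg _ fun ω => mul_nonneg (Codebook.entryInd_nonneg ..)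
      (mul_nonneg (Codebook.likelihood_nonneg ..) ((Codebook.decoder ..).nonneg _))
  obtain ⟨hs, -, -, -, hW⟩ := (qMAC_pos_iff qS qT qX1 qX2 Wch).mp hq
  have hkk : k2 s2 = k1 s1 := (hk s1 s2 hs).symm
  have hZ : 0 < qS.p (s1, s2) * (Wch x1 x2).p y := mul_pos hs hW
  set Z := qS.p (s1, s2) * (Wch x1 x2).p y
  set J := fun ω => ∑ ŝ ∈ univ.erase (s1, s2),
    Codebook.likelihood qS Wch k1 k2 (Codebook.setEntries k1 (s1, s2) t x1 x2 ω) y ŝ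
  have hJ : ∀ ω, 0 ≤ J ω := fun ω => Finset.sum_nonneg fun _ _ => Codebook.likelihood_nonneg ..
  rw [qMAC_mul_inv_eq qS qT qX1 qX2 Wch k1 hq, expect_entryInd_mul]
  refine mul_le_mul_of_nonneg_left ?_ (mul_nonneg (mul_nonneg (qT.nonneg _)
    ((qX1 _ _).nonneg _)) ((qX2 _ _).nonneg _))
  simp only [Codebook.likelihood_mul_decoder_setEntries qS Wch k1 k2 (s := (s1, s2)) hkk hZ,
    FinPMF.expect_const_mul]
  refine mul_le_mul_of_nonneg_left (mul_le_mul_of_nonneg_left ?_ hZ.le) hZ.le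
  calc _ ≤ ((codebookPMF qT qX1 qX2).expect fun ω => Z + J ω)⁻¹ := by
        rw [FinPMF.expect_const_add]
        exact inv_anti₀ (add_pos_of_pos_of_nonneg hZ (FinPMF.expect_nonneg _ hJ))
          ((add_le_add_iff_left Z).2
            (expect_interference_le qS qT qX1 qX2 Wch k1 k2 (s := (s1, s2)) hk hkk))
    _ ≤ _ := FinPMF.inv_expect_le_expect_inv _ fun ω => add_pos_of_pos_of_nonneg hZ (hJ ω)

theorem expect_pCorrectMAC_eq :
    (codebookPMF qT qX1 qX2).expect (fun ω => pCorrectMAC qS Wch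
      (fun s1 => FinPMF.pure (Codebook.word1 k1 ω s1))
      (fun s2 => FinPMF.pure (Codebook.word2 k2 ω s2)) (Codebook.decoder qS Wch k1 k2 ω)) =
      ∑ s1, ∑ s2, ∑ t, ∑ x1, ∑ x2, ∑ y, (codebookPMF qT qX1 qX2).expect fun ω =>
        Codebook.entryInd k1 (s1, s2) t x1 x2 ω * (Codebook.likelihood qS Wch k1 k2 ω y (s1, s2) *
          (Codebook.decoder qS Wch k1 k2 ω y).p (s1, s2)) := by
  have split : ∀ ω : Codebook K T S1 S2 X1 X2, pCorrectMAC qS Wch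
      (fun s1 => FinPMF.pure (Codebook.word1 k1 ω s1))
      (fun s2 => FinPMF.pure (Codebook.word2 k2 ω s2)) (Codebook.decoder qS Wch k1 k2 ω) =
      ∑ s1, ∑ s2, ∑ t, ∑ x1, ∑ x2, ∑ y, Codebook.entryInd k1 (s1, s2) t x1 x2 ω *
        (Codebook.likelihood qS Wch k1 k2 ω y (s1, s2) *
          (Codebook.decoder qS Wch k1 k2 ω y).p (s1, s2)) := fun ω => by
    rw [pCorrectMAC_pure]
    refine Finset.sum_congr rfl fun s1 _ => Finset.sum_congr rfl fun s2 _ => ?_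
    simp only [← Finset.mul_sum, ← Finset.sum_mul, Codebook.sum_entryInd, one_mul]
    rfl
  simp only [split, FinPMF.expect_sum]

end RandomCodebook

/-- One-shot joint source-channel coding over a MAC (Cover–El Gamal–Salehi form). -/
theorem oneShot_jscc_mac (qS : FinPMF (S1 × S2)) (Wch : X1 → X2 → FinPMF Y)
    (k1 : S1 → K) (k2 : S2 → K)
    (hk : ∀ s1 s2, 0 < qS.p (s1, s2) → k1 s1 = k2 s2)
    (qT : FinPMF T) (qX1 : S1 → T → FinPMF X1) (qX2 : S2 → T → FinPMF X2) :
    ∃ (enc1 : S1 → FinPMF X1) (enc2 : S2 → FinPMF X2) (dec : Y → FinPMF (S1 × S2)),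
      pCorrectMAC qS Wch enc1 enc2 dec ≥
        ∑ s1 : S1, ∑ s2 : S2, ∑ t : T, ∑ x1 : X1, ∑ x2 : X2, ∑ y : Y,
          qMAC qS qT qX1 qX2 Wch s1 s2 t x1 x2 y *
          (1 + (2 : ℝ) ^ (hS1cS2 qS s1 s2 - iYX1cX2S2T qS qT qX1 qX2 Wch y x1 x2 s2 t)
             + (2 : ℝ) ^ (hS2cS1 qS s1 s2 - iYX2cX1S1T qS qT qX1 qX2 Wch y x1 x2 s1 t)
             + (2 : ℝ) ^ (hS1S2cK qS k1 s1 s2 -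
                 iYX1X2cKT qS qT qX1 qX2 Wch k1 y x1 x2 (k1 s1) t)
             + (2 : ℝ) ^ (hS1S2 qS s1 s2 - iYX1X2 qS qT qX1 qX2 Wch y x1 x2))⁻¹ := by
  classical
  obtain ⟨ω, hω⟩ := (codebookPMF (K := K) qT qX1 qX2).exists_expect_le fun ω =>
    pCorrectMAC qS Wch (fun s1 => FinPMF.pure (Codebook.word1 k1 ω s1))
      (fun s2 => FinPMF.pure (Codebook.word2 k2 ω s2)) (Codebook.decoder qS Wch k1 k2 ω)
  refine ⟨_, _, _, le_trans ?_ hω⟩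
  rw [expect_pCorrectMAC_eq]
  gcongr with s1 _ s2 _ t _ x1 _ x2 _ y _
  exact qMAC_mul_inv_le_expect qS qT qX1 qX2 Wch k1 k2 hk s1 s2 t x1 x2 y
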